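/- Let H₁, …, Hₙ be finite dimensional Hilbert spaces and let T₁, T₂ be bounded operators on H₁ ⊗ ⋯ ⊗ Hₙ such that ⟨T₁ ξ, ξ⟩ = ⟨T₂ ξ, ξ⟩ for all unit simple tensors ξ = ν₁ ⊗ ⋯ ⊗ νₙ. Then T₁ = T₂; that is, a bounded operator T on H₁ ⊗ ⋯ ⊗ Hₙ is uniquely determined by the values ⟨T(ν₁ ⊗ ⋯ ⊗ νₙ), ν₁ ⊗ ⋯ ⊗ νₙ⟩ on unit simple tensors. -/
import Mathlib


open scoped InnerProductSpace

/-- `t` realizes `E` as the Hilbert tensor product of the `H i`. -/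
def IsHilbertTensorMap {n : ℕ} {H : Fin n → Type*}
    [∀ i, NormedAddCommGroup (H i)] [∀ i, InnerProductSpace ℂ (H i)]
    {E : Type*} [NormedAddCommGroup E] [InnerProductSpace ℂ E]
    (t : (∀ i, H i) → E) : Prop :=
  (∀ v w : ∀ i, H i, ⟪t v, t w⟫_ℂ = ∏ i, ⟪v i, w i⟫_ℂ) ∧
  (∀ (v : ∀ i, H i) (i : Fin n) (a b : H i),
      t (Function.update v i (a + b)) =
        t (Function.update v i a) + t (Function.update v i b)) ∧
  (∀ (v : ∀ i, H i) (i : Fin n) (z : ℂ) (a : H i),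
      t (Function.update v i (z • a)) = z • t (Function.update v i a)) ∧
  (Submodule.span ℂ (Set.range t)).topologicalClosure = ⊤

section Aux

variable {n : ℕ} {H : Fin n → Type*}
    [∀ i, NormedAddCommGroup (H i)] [∀ i, InnerProductSpace ℂ (H i)]
    {E : Type*} [NormedAddCommGroup E] [InnerProductSpace ℂ E]

/-- Pulling scalars out of every coordinate. -/
lemma IsHilbertTensorMap.smul_pi {t : (∀ i, H i) → E} (ht : IsHilbertTensorMap t)
    (c : Fin n → ℂ) (v : ∀ i, H i) :
    t (fun i => c i • v i) = (∏ i, c i) • t v := by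
  have key : ∀ s : Finset (Fin n),
      t (fun i => if i ∈ s then c i • v i else v i) = (∏ i ∈ s, c i) • t v := by
    intro s
    induction s using Finset.induction with
    | empty => simp
    | @insert a s ha ih =>
      have hfun : (fun i => if i ∈ insert a s then c i • v i else v i)
          = Function.update (fun i => if i ∈ s then c i • v i else v i) a
            (c a • (fun i => if i ∈ s then c i • v i else v i) a) := by
        funext i
        by_cases hia : i = a
        · subst hia; simp [ha]
        · simp [Function.update_of_ne hia, hia]
      rw [hfun, ht.2.2.1, Function.update_eq_self, ih,
        Finset.prod_insert ha, smul_smul]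
  have := key Finset.univ
  simpa using this

/-- A simple tensor with a zero coordinate vanishes. -/
lemma IsHilbertTensorMap.eq_zero {t : (∀ i, H i) → E} (ht : IsHilbertTensorMap t)
    {v : ∀ i, H i} {i : Fin n} (hv : v i = 0) : t v = 0 := by
  have : ⟪t v, t v⟫_ℂ = 0 := by
    rw [ht.1]
    exact Finset.prod_eq_zero (Finset.mem_univ i) (by simp [hv])
  exact inner_self_eq_zero.mp this

end Aux

/-- On a (finite dimensional) tensor product of complex Hilbert spaces, a
bounded operator is uniquely determined by its quadratic form evaluated on
unit simple tensors: if `⟪T₁ ξ, ξ⟫ = ⟪T₂ ξ, ξ⟫` for every unit simple tensor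
`ξ = ν₁ ⊗ ⋯ ⊗ νₙ`, then `T₁ = T₂`. -/
theorem operator_determined_by_simple_tensor_diagonal
    {n : ℕ} {H : Fin n → Type*}
    [∀ i, NormedAddCommGroup (H i)] [∀ i, InnerProductSpace ℂ (H i)]
    [∀ i, FiniteDimensional ℂ (H i)]
    {E : Type*} [NormedAddCommGroup E] [InnerProductSpace ℂ E]
    [FiniteDimensional ℂ E]
    (t : (∀ i, H i) → E) (ht : IsHilbertTensorMap t)
    (T₁ T₂ : E →L[ℂ] E)
    (h : ∀ ν : ∀ j, H j, (∀ j, ‖ν j‖ = 1) →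
      ⟪T₁ (t ν), t ν⟫_ℂ = ⟪T₂ (t ν), t ν⟫_ℂ) :
    T₁ = T₂ := by
  set S : E →L[ℂ] E := T₁ - T₂ with hS
  -- the quadratic form of `S` vanishes on all simple tensors
  have hdiag : ∀ ν : ∀ i, H i, ⟪S (t ν), t ν⟫_ℂ = 0 := by
    intro ν
    by_cases hν : ∃ i, ν i = 0
    · obtain ⟨i, hi⟩ := hν
      rw [ht.eq_zero hi]
      simp
    push_neg at hν
    set ν' : ∀ i, H i := fun i => (‖ν i‖ : ℂ)⁻¹ • ν i with hν'
    have hnorm : ∀ i, ‖ν' i‖ = 1 := by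
      intro i
      have h0 : ‖ν i‖ ≠ 0 := norm_ne_zero_iff.mpr (hν i)
      simp [hν', norm_smul, h0]
    have hrec : ν = fun i => (‖ν i‖ : ℂ) • ν' i := by
      funext i
      have h0 : (‖ν i‖ : ℂ) ≠ 0 := by
        simpa using norm_ne_zero_iff.mpr (hν i)
      simp [hν', smul_smul, mul_inv_cancel₀ h0]
    have ht' : t ν = (∏ i, (‖ν i‖ : ℂ)) • t ν' := by
      conv_lhs => rw [hrec]
      exact ht.smul_pi _ _
    have hx : ⟪S (t ν'), t ν'⟫_ℂ = 0 := by
      have := h ν' hnorm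
      simp only [hS, ContinuousLinearMap.sub_apply, inner_sub_left]
      rw [this, sub_self]
    rw [ht', map_smul, inner_smul_left, inner_smul_right, hx, mul_zero, mul_zero]
  -- polarization, one coordinate at a time
  have hQ : ∀ k : ℕ, ∀ ν μ : ∀ i, H i, (∀ i : Fin n, k ≤ (i : ℕ) → ν i = μ i) →
      ⟪S (t ν), t μ⟫_ℂ = 0 := by
    intro k
    induction k with
    | zero =>
      intro ν μ hag
      have : ν = μ := funext fun i => hag i (Nat.zero_le _)
      subst this
      exact hdiag ν
    | succ k ih =>
      intro ν μ hag
      by_cases hk : k < n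
      · set κ : Fin n := ⟨k, hk⟩ with hκ
        have expand : ∀ z : ℂ,
            t (Function.update ν κ (ν κ + z • μ κ)) =
              t ν + z • t (Function.update ν κ (μ κ)) := by
          intro z
          rw [ht.2.1, ht.2.2.1, Function.update_eq_self]
        have expand' : ∀ z : ℂ,
            t (Function.update μ κ (ν κ + z • μ κ)) =
              t (Function.update μ κ (ν κ)) + z • t μ := by
          intro z
          rw [ht.2.1, ht.2.2.1, Function.update_eq_self]
        have agree : ∀ (a b : H κ) (i : Fin n), k ≤ (i : ℕ) →
            Function.update ν κ a i = Function.update μ κ b i → True := fun _ _ _ _ _ => trivial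
        have hup : ∀ i : Fin n, k ≤ (i : ℕ) → i ≠ κ → ν i = μ i := by
          intro i hi hne
          refine hag i ?_
          rcases Nat.lt_or_ge (i : ℕ) (k + 1) with h' | h'
          · exfalso
            apply hne
            apply Fin.ext
            have hκv : (κ : ℕ) = k := rfl
            omega
          · exact h'
        have hA : ⟪S (t ν), t (Function.update μ κ (ν κ))⟫_ℂ = 0 := by
          refine ih ν (Function.update μ κ (ν κ)) ?_
          intro i hi
          by_cases hiκ : i = κ
          · subst hiκ; simp
          · rw [Function.update_of_ne hiκ]
            exact hup i hi hiκ
        have hD : ⟪S (t (Function.update ν κ (μ κ))), t μ⟫_ℂ = 0 := by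
          refine ih (Function.update ν κ (μ κ)) μ ?_
          intro i hi
          by_cases hiκ : i = κ
          · subst hiκ; simp
          · rw [Function.update_of_ne hiκ]
            exact hup i hi hiκ
        have key : ∀ z : ℂ,
            z * ⟪S (t ν), t μ⟫_ℂ +
              (starRingEnd ℂ) z *
                ⟪S (t (Function.update ν κ (μ κ))), t (Function.update μ κ (ν κ))⟫_ℂ = 0 := by
          intro z
          have h0 : ⟪S (t (Function.update ν κ (ν κ + z • μ κ))),
              t (Function.update μ κ (ν κ + z • μ κ))⟫_ℂ = 0 := by
            refine ih _ _ ?_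
            intro i hi
            by_cases hiκ : i = κ
            · subst hiκ; simp
            · rw [Function.update_of_ne hiκ, Function.update_of_ne hiκ]
              exact hup i hi hiκ
          rw [expand, expand'] at h0
          simp only [map_add, map_smul, inner_add_left, inner_add_right,
            inner_smul_left, inner_smul_right] at h0
          linear_combination h0 - hA - ((starRingEnd ℂ) z * z) * hD
        have e1 := key 1
        have e2 := key Complex.I
        rw [map_one] at e1
        rw [Complex.conj_I] at e2
        have h3 : Complex.I * ⟪S (t ν), t μ⟫_ℂ =
            Complex.I * ⟪S (t (Function.update ν κ (μ κ))),
              t (Function.update μ κ (ν κ))⟫_ℂ := by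
          linear_combination e2
        have hBC := mul_left_cancel₀ Complex.I_ne_zero h3
        linear_combination (1 / 2 : ℂ) * e1 + (1 / 2 : ℂ) * hBC
      · exact ih ν μ fun i hi =>
          absurd hi (not_le.mpr (lt_of_lt_of_le i.isLt (not_lt.mp hk)))
  have hall : ∀ ν μ : ∀ i, H i, ⟪S (t ν), t μ⟫_ℂ = 0 := fun ν μ =>
    hQ n ν μ fun i hi => absurd hi (not_le.mpr i.isLt)
  have hspan : Submodule.span ℂ (Set.range t) = ⊤ := by
    have hclosed : IsClosed ((Submodule.span ℂ (Set.range t)) : Set E) :=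
      Submodule.closed_of_finiteDimensional _
    rw [← hclosed.submodule_topologicalClosure_eq]
    exact ht.2.2.2
  have hker : ∀ ν : ∀ i, H i, S (t ν) = 0 := by
    intro ν
    have key : ∀ y : E, ⟪S (t ν), y⟫_ℂ = 0 := by
      intro y
      have hy : y ∈ Submodule.span ℂ (Set.range t) := hspan ▸ Submodule.mem_top
      induction hy using Submodule.span_induction with
      | mem x hx => obtain ⟨μ, rfl⟩ := hx; exact hall ν μ
      | zero => simp
      | add x y _ _ hx hy => rw [inner_add_right, hx, hy, add_zero]
      | smul c x _ hx => rw [inner_smul_right, hx, mul_zero]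
    exact inner_self_eq_zero.mp (key (S (t ν)))
  have hSz : ∀ x : E, S x = 0 := by
    intro x
    have hx : x ∈ Submodule.span ℂ (Set.range t) := hspan ▸ Submodule.mem_top
    induction hx using Submodule.span_induction with
    | mem y hy => obtain ⟨ν, rfl⟩ := hy; exact hker ν
    | zero => simp
    | add x y _ _ hx hy => rw [map_add, hx, hy, add_zero]
    | smul c x _ hx => rw [map_smul, hx, smul_zero]
  ext x
  have := hSz x
  rw [hS, ContinuousLinearMap.sub_apply, sub_eq_zero] at this
  exact this
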